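/- Let x ∈ ℝⁿ and for q ≥ 0 define L_{x,1}(q) = log λ₁(ℤ^{n+1}, C_x(e^q)), where C_x(e^q) = { y ∈ ℝ^{n+1} : |y_i| ≤ 1 for 1 ≤ i ≤ n+1, |y·(1,x)| ≤ e^{-q} } and λ₁ is the first successive minimum. Then liminf_{q→∞} L_{x,1}(q)/q = 1/(1 + ω(x)). -/

import Mathlib

/-- Distance from a real number to the nearest integer. -/
noncomputable def nint (y : ℝ) : ℝ := |y - round y|

/-- Maximum norm of an integer vector. -/
noncomputable def maxNorm {n : ℕ} (q : Fin n → ℤ) : ℝ :=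
  ((Finset.univ.sup fun i => (q i).natAbs : ℕ) : ℝ)

/-- Scalar product of a real vector with an integer vector. -/
noncomputable def dotIZ {n : ℕ} (x : Fin n → ℝ) (q : Fin n → ℤ) : ℝ :=
  ∑ i, x i * (q i : ℝ)

/-- The set `DI_n(ε)` of `ε`-Dirichlet-improvable points: for all sufficiently large
`Q > 1` there is a nonzero integer vector `q` with `|q| ≤ Q` and `⟨x·q⟩ ≤ ε Q^{-n}`. -/
def DIset (n : ℕ) (ε : ℝ) : Set (Fin n → ℝ) :=
  {x | ∃ Q₀ : ℝ, ∀ Q : ℝ, Q₀ ≤ Q → 1 < Q →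
    ∃ q : Fin n → ℤ, q ≠ 0 ∧ maxNorm q ≤ Q ∧ nint (dotIZ x q) ≤ ε * Q ^ (-(n : ℝ))}

/-- The set of Dirichlet improvable points. -/
def DI (n : ℕ) : Set (Fin n → ℝ) := ⋃ ε ∈ Set.Ioo (0 : ℝ) 1, DIset n ε

/-- The set of badly approximable points. -/
def Bad (n : ℕ) : Set (Fin n → ℝ) :=
  {x | ∃ ε ∈ Set.Ioo (0 : ℝ) 1, ∀ q : Fin n → ℤ, q ≠ 0 →
    ε * (maxNorm q) ^ (-(n : ℝ)) ≤ nint (dotIZ x q)}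

/-- The set of singular points. -/
def Sing (n : ℕ) : Set (Fin n → ℝ) := ⋂ ε ∈ Set.Ioo (0 : ℝ) 1, DIset n ε

/-- `x` admits approximations with exponent `w` for arbitrarily large `Q`. -/
def HasExp {n : ℕ} (x : Fin n → ℝ) (w : ℝ) : Prop :=
  ∀ Q₀ : ℝ, ∃ Q : ℝ, Q₀ < Q ∧ 1 < Q ∧
    ∃ q : Fin n → ℤ, q ≠ 0 ∧ maxNorm q ≤ Q ∧ nint (dotIZ x q) ≤ Q ^ (-w)

/-- The Diophantine exponent `ω(x) ∈ [n, ∞]`, valued in `ENNReal`. -/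
noncomputable def omegaExp {n : ℕ} (x : Fin n → ℝ) : ENNReal :=
  sSup (ENNReal.ofReal '' {w : ℝ | 0 < w ∧ HasExp x w})
open scoped Pointwise

/-- The convex body `C_x(e^q)` in `ℝ^{n+1}`. -/
def bodyC {n : ℕ} (x : Fin n → ℝ) (q : ℝ) : Set (Fin (n + 1) → ℝ) :=
  {y | (∀ i, |y i| ≤ 1) ∧ |∑ i, y i * (Matrix.vecCons (1 : ℝ) x) i| ≤ Real.exp (-q)}

/-- The first successive minimum of the lattice `ℤ^{n+1}` with respect to a body `C`. -/
noncomputable def lambda1 {n : ℕ} (C : Set (Fin (n + 1) → ℝ)) : ℝ :=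
  sInf {t : ℝ | 0 < t ∧ ∃ v : Fin (n + 1) → ℤ, v ≠ 0 ∧ (fun i => (v i : ℝ)) ∈ t • (C : Set (Fin (n + 1) → ℝ))}


/-- `L_{x,1}(q) = log λ₁(ℤ^{n+1}, C_x(e^q))`. -/
noncomputable def Lx1 {n : ℕ} (x : Fin n → ℝ) (q : ℝ) : ℝ :=
  Real.log (lambda1 (bodyC x q))

/-!
A nonzero integer point `(p, q)` of `s • C_x(e^t)` is an approximation with `|q| ≤ s` and
`|p + q·x| ≤ s e^{-t}`. An approximation of exponent `w` at height `Q` therefore lies in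
`O(Q) • C_x(e^t)` for `t = (1 + w) log Q`, so `L_{x,1}(t)/t ≤ 1/(1 + w) + O(1/t)` along an
unbounded sequence of `t`. Conversely, if exponent `w` fails beyond some height, then for large `t`
no nonzero integer point lies in `s • C_x(e^t)` with `s < e^{t/(1+w)}` (at `Q = e^{t/(1+w)}` one
has `Q e^{-t} = Q^{-w}`), so `L_{x,1}(t)/t ≥ 1/(1 + w)`. The liminf is thus squeezed between the
values of the continuous antitone map `a ↦ 1/(1 + a)` on both sides of `ω(x)`; the trivial bound
`λ₁ ≤ e^t` covers the case where no exponent is admissible.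
-/

open Filter Topology Set Real
open scoped ENNReal

lemma Filter.liminf_le_of_frequently_le_of_tendsto {α β : Type*} [CompleteLinearOrder β]
    [DenselyOrdered β] [TopologicalSpace β] [OrderTopology β] {f g : α → β} {l : Filter α}
    {a : β} (hfg : ∃ᶠ x in l, f x ≤ g x) (hg : Tendsto g l (𝓝 a)) : liminf f l ≤ a :=
  le_of_forall_gt_imp_ge_of_dense fun _ hb => liminf_le_of_frequently_le' <|
    (hfg.and_eventually (hg.eventually (gt_mem_nhds hb))).mono fun _ h => h.1.trans h.2.le

lemma ENNReal.eq_inv_one_add_sSup_ofReal {A : ℝ≥0∞} {W : Set ℝ} (hA : A ≤ 1)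
    (hmem : ∀ w ∈ W, A ≤ (1 + ENNReal.ofReal w)⁻¹)
    (hnotMem : ∀ w, 0 < w → w ∉ W → (1 + ENNReal.ofReal w)⁻¹ ≤ A) :
    A = (1 + sSup (ENNReal.ofReal '' W))⁻¹ := by
  set ω := sSup (ENNReal.ofReal '' W)
  have hA_inv : 1 ≤ A⁻¹ := ENNReal.one_le_inv.2 hA
  apply le_antisymm
  · rw [ENNReal.le_inv_iff_le_inv, ← ENNReal.le_sub_iff_add_le_left ENNReal.one_ne_top hA_inv]
    refine sSup_le ?_
    rintro _ ⟨w, hw, rfl⟩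
    rw [ENNReal.le_sub_iff_add_le_left ENNReal.one_ne_top hA_inv, ← ENNReal.le_inv_iff_le_inv]
    exact hmem w hw
  · rcases eq_or_ne ω ⊤ with hω | hω
    · simp [hω]
    -- approach `ω` from the right by finite reals, which lie outside `W`
    have : (𝓝[>] ω).NeBot := nhdsGT_neBot_of_exists_gt ⟨⊤, hω.lt_top⟩
    have hcont : Continuous fun a : ℝ≥0∞ => (1 + a)⁻¹ := by fun_prop
    refine le_of_tendsto (hcont.tendsto ω |>.mono_left (nhdsWithin_le_nhds (s := Ioi ω))) ?_
    filter_upwards [Ioo_mem_nhdsGT hω.lt_top] with a ⟨hωa, ha⟩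
    rw [← ENNReal.ofReal_toReal ha.ne]
    refine hnotMem _ (ENNReal.toReal_pos (pos_of_gt hωa).ne' ha.ne) fun hW => hωa.not_ge ?_
    rw [← ENNReal.ofReal_toReal ha.ne]
    exact le_sSup (mem_image_of_mem _ hW)

lemma ENNReal.ofReal_inv_one_add {w : ℝ} (hw : 0 ≤ w) :
    ENNReal.ofReal (1 + w)⁻¹ = (1 + ENNReal.ofReal w)⁻¹ := by
  rw [ENNReal.ofReal_inv_of_pos (by positivity), ENNReal.ofReal_add zero_le_one hw,
    ENNReal.ofReal_one]

section DiophantineApproximation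

variable {n : ℕ}

lemma maxNorm_le_iff {q : Fin n → ℤ} {c : ℝ} (hc : 0 ≤ c) :
    maxNorm q ≤ c ↔ ∀ i, |(q i : ℝ)| ≤ c := by
  rw [maxNorm, ← Nat.le_floor_iff hc, Finset.sup_le_iff]
  simp only [Finset.mem_univ, true_implies, Nat.le_floor_iff hc, Nat.cast_natAbs, Int.cast_abs]

lemma abs_le_maxNorm (q : Fin n → ℤ) (i : Fin n) : |(q i : ℝ)| ≤ maxNorm q :=
  (maxNorm_le_iff (Nat.cast_nonneg _)).1 le_rfl i

lemma abs_dotIZ_le (x : Fin n → ℝ) (q : Fin n → ℤ) :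
    |dotIZ x q| ≤ (∑ i, |x i|) * maxNorm q :=
  calc |dotIZ x q| ≤ ∑ i, |x i * q i| := Finset.abs_sum_le_sum_abs _ _
    _ ≤ ∑ i, |x i| * maxNorm q := Finset.sum_le_sum fun i _ => by
        rw [abs_mul]; exact mul_le_mul_of_nonneg_left (abs_le_maxNorm q i) (abs_nonneg _)
    _ = (∑ i, |x i|) * maxNorm q := (Finset.sum_mul ..).symm

lemma dotIZ_vecCons_one (x : Fin n → ℝ) (v : Fin (n + 1) → ℤ) :
    dotIZ (Matrix.vecCons 1 x) v = v 0 + dotIZ x (Fin.tail v) := by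
  simp [dotIZ, Fin.sum_univ_succ, Fin.tail]

lemma intCast_mem_smul_bodyC_iff {x : Fin n → ℝ} {t s : ℝ} (hs : 0 < s) (v : Fin (n + 1) → ℤ) :
    (fun i => (v i : ℝ)) ∈ s • bodyC x t ↔
      (∀ i, |(v i : ℝ)| ≤ s) ∧ |dotIZ (Matrix.vecCons 1 x) v| ≤ s * exp (-t) := by
  have hdot : ∑ i, s⁻¹ * v i * Matrix.vecCons (1 : ℝ) x i =
      s⁻¹ * dotIZ (Matrix.vecCons 1 x) v := by
    simp only [dotIZ, Finset.mul_sum]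
    exact Finset.sum_congr rfl fun i _ => by ring
  rw [mem_smul_set_iff_inv_smul_mem₀ hs.ne']
  simp only [bodyC, mem_ofPred_eq, Pi.smul_apply, smul_eq_mul, hdot, abs_mul, abs_inv,
    abs_of_pos hs, inv_mul_le_iff₀ hs, mul_one]

lemma single_zero_mem_smul_bodyC (x : Fin n → ℝ) (t : ℝ) :
    (fun i => ((Pi.single 0 1 : Fin (n + 1) → ℤ) i : ℝ)) ∈ exp |t| • bodyC x t := by
  refine (intCast_mem_smul_bodyC_iff (exp_pos _) _).2 ⟨fun i => ?_, ?_⟩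
  · rcases eq_or_ne i 0 with rfl | hi <;> simp [*, (exp_pos _).le]
  · rw [dotIZ_vecCons_one, ← exp_add]
    simp [Fin.tail, Fin.succ_ne_zero, dotIZ, le_abs_self]

lemma lambda1_bodyC_le {x : Fin n → ℝ} {t s : ℝ} (hs : 0 < s) {v : Fin (n + 1) → ℤ}
    (hv : v ≠ 0) (hvs : ∀ i, |(v i : ℝ)| ≤ s)
    (hdot : |dotIZ (Matrix.vecCons 1 x) v| ≤ s * exp (-t)) : lambda1 (bodyC x t) ≤ s :=
  csInf_le ⟨0, fun _ h => h.1.le⟩ ⟨hs, v, hv, (intCast_mem_smul_bodyC_iff hs v).2 ⟨hvs, hdot⟩⟩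

lemma le_lambda1_bodyC {x : Fin n → ℝ} {t c : ℝ}
    (h : ∀ s, 0 < s → ∀ v : Fin (n + 1) → ℤ, v ≠ 0 → (∀ i, |(v i : ℝ)| ≤ s) →
      |dotIZ (Matrix.vecCons 1 x) v| ≤ s * exp (-t) → c ≤ s) :
    c ≤ lambda1 (bodyC x t) := by
  refine le_csInf ⟨_, exp_pos |t|, _, by simp, single_zero_mem_smul_bodyC x t⟩ ?_
  rintro s ⟨hs, v, hv, hmem⟩
  obtain ⟨hvs, hdot⟩ := (intCast_mem_smul_bodyC_iff hs v).1 hmem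
  exact h s hs v hv hvs hdot

lemma one_le_lambda1_bodyC (x : Fin n → ℝ) (t : ℝ) : 1 ≤ lambda1 (bodyC x t) :=
  le_lambda1_bodyC fun s _ v hv hvs _ => by
    obtain ⟨i, hi⟩ := Function.ne_iff.1 hv
    exact (hvs i).trans' <| by exact_mod_cast Int.one_le_abs hi

lemma lambda1_bodyC_le_exp_abs (x : Fin n → ℝ) (t : ℝ) : lambda1 (bodyC x t) ≤ exp |t| :=
  csInf_le ⟨0, fun _ h => h.1.le⟩ ⟨exp_pos |t|, _, by simp, single_zero_mem_smul_bodyC x t⟩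

lemma Lx1_le_self (x : Fin n → ℝ) {t : ℝ} (ht : 0 ≤ t) : Lx1 x t ≤ t := by
  simpa [Lx1, abs_of_nonneg ht] using
    log_le_log (zero_lt_one.trans_le (one_le_lambda1_bodyC x t)) (lambda1_bodyC_le_exp_abs x t)

end DiophantineApproximation

section Exponents

variable {n : ℕ} {x : Fin n → ℝ} {w : ℝ}

lemma exp_div_one_add_le_lambda1_bodyC (hw : 0 < w) (h : ¬HasExp x w) :
    ∀ᶠ t in atTop, exp (t / (1 + w)) ≤ lambda1 (bodyC x t) := by
  unfold HasExp at h
  push Not at h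
  obtain ⟨Q₀, hQ₀⟩ := h
  have h1w : 0 < 1 + w := by linarith
  have hexp : Tendsto (fun t => exp (t / (1 + w))) atTop atTop :=
    tendsto_exp_atTop.comp (tendsto_id.atTop_div_const h1w)
  filter_upwards [eventually_gt_atTop 0, hexp.eventually_gt_atTop Q₀] with t ht hQ
  set c := exp (t / (1 + w))
  have hc1 : 1 < c := one_lt_exp_iff.2 (div_pos ht h1w)
  have hce : c * exp (-t) = c ^ (-w) := by
    rw [← exp_add, ← exp_mul]
    congr 1
    field_simp
    ring
  refine le_lambda1_bodyC fun s _ v hv hvs hdot => le_of_not_gt fun hsc => ?_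
  have happ : |v 0 + dotIZ x (Fin.tail v)| ≤ c ^ (-w) := by
    rw [← dotIZ_vecCons_one, ← hce]
    exact hdot.trans (mul_le_mul_of_nonneg_right hsc.le (exp_pos _).le)
  by_cases hq : Fin.tail v = 0
  · have hv0 : v 0 ≠ 0 := fun h0 => hv <| by
      rw [← Fin.cons_self_tail v, h0, hq]
      exact funext fun i => Fin.cases rfl (fun _ => rfl) i
    have h1 : (1 : ℝ) ≤ |(v 0 : ℝ)| := by exact_mod_cast Int.one_le_abs hv0
    have h2 : c ^ (-w) < 1 := rpow_lt_one_of_one_lt_of_neg hc1 (neg_lt_zero.2 hw)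
    simp only [hq, dotIZ, Pi.zero_apply, Int.cast_zero, mul_zero, Finset.sum_const_zero,
      add_zero] at happ
    linarith
  · refine (hQ₀ c hQ hc1 _ hq ((maxNorm_le_iff (by positivity)).2 fun i =>
      (hvs i.succ).trans hsc.le)).not_ge ?_
    calc nint (dotIZ x (Fin.tail v)) ≤ |dotIZ x (Fin.tail v) - ((-v 0 : ℤ) : ℝ)| := round_le _ _
      _ = |v 0 + dotIZ x (Fin.tail v)| := by push_cast; ring_nf
      _ ≤ c ^ (-w) := happ

lemma inv_one_add_le_liminf_Lx1_div (hw : 0 < w) (h : ¬HasExp x w) :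
    (1 + ENNReal.ofReal w)⁻¹ ≤ liminf (fun t => ENNReal.ofReal (Lx1 x t / t)) atTop := by
  rw [← ENNReal.ofReal_inv_one_add hw.le]
  refine le_liminf_of_le (by isBoundedDefault) ?_
  filter_upwards [eventually_gt_atTop 0, exp_div_one_add_le_lambda1_bodyC hw h] with t ht hlam
  refine ENNReal.ofReal_le_ofReal ?_
  rw [le_div_iff₀ ht, inv_mul_eq_div]
  simpa [Lx1] using log_le_log (exp_pos _) hlam

lemma lambda1_bodyC_le_of_approx {Q : ℝ} (hQ : 1 ≤ Q) {q : Fin n → ℤ} (hq : q ≠ 0)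
    (hqQ : maxNorm q ≤ Q) (happ : nint (dotIZ x q) ≤ Q ^ (-w)) :
    lambda1 (bodyC x ((1 + w) * log Q)) ≤ (∑ i, |x i| + 1) * Q := by
  set r := dotIZ x q
  have hQ0 : 0 < Q := by linarith
  have hsum : 0 ≤ ∑ i, |x i| := Finset.sum_nonneg fun i _ => abs_nonneg _
  have hQC : Q ≤ (∑ i, |x i| + 1) * Q := le_mul_of_one_le_left hQ0.le (by linarith)
  refine lambda1_bodyC_le (by positivity) (v := Matrix.vecCons (-round r) q) ?_ ?_ ?_
  · exact fun h => hq <| funext fun i => by simpa using congrFun h i.succ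
  · refine Fin.cases ?_ fun i => ?_
    · have hround : |(round r : ℝ)| ≤ |r| + 1 / 2 := by
        have := abs_sub_abs_le_abs_sub (round r : ℝ) r
        linarith [abs_sub_round r, abs_sub_comm r (round r : ℝ)]
      have hr : |r| ≤ (∑ i, |x i|) * Q :=
        (abs_dotIZ_le x q).trans (mul_le_mul_of_nonneg_left hqQ hsum)
      simp only [Matrix.cons_val_zero, Int.cast_neg, abs_neg]
      linarith
    · simpa using ((abs_le_maxNorm q i).trans hqQ).trans hQC
  · calc |dotIZ (Matrix.vecCons 1 x) (Matrix.vecCons (-round r) q)| = nint r := by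
          rw [dotIZ_vecCons_one, show Fin.tail (Matrix.vecCons (-round r) q) = q from rfl, nint,
            Matrix.cons_val_zero, Int.cast_neg, neg_add_eq_sub]
      _ ≤ Q ^ (-w) := happ
      _ = exp (log Q) * exp (-((1 + w) * log Q)) := by
          rw [rpow_def_of_pos hQ0, ← exp_add]
          ring_nf
      _ ≤ (∑ i, |x i| + 1) * Q * exp (-((1 + w) * log Q)) := by
          rw [exp_log hQ0]
          gcongr

lemma liminf_Lx1_div_le (hw : 0 < w) (h : HasExp x w) :
    liminf (fun t => ENNReal.ofReal (Lx1 x t / t)) atTop ≤ (1 + ENNReal.ofReal w)⁻¹ := by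
  set C := ∑ i, |x i| + 1
  have hC : 0 < C := by positivity
  rw [← ENNReal.ofReal_inv_one_add hw.le]
  refine liminf_le_of_frequently_le_of_tendsto
    (g := fun t => ENNReal.ofReal ((1 + w)⁻¹ + log C / t)) ?_ ?_
  · rw [frequently_atTop]
    intro T
    obtain ⟨Q, hTQ, hQ1, q, hq, hqQ, happ⟩ := h (exp T)
    have hTQ : T < log Q := (lt_log_iff_exp_lt (by linarith)).2 hTQ
    have hQ0 : 0 < log Q := log_pos hQ1
    refine ⟨(1 + w) * log Q, by nlinarith, ENNReal.ofReal_le_ofReal ?_⟩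
    have hL : Lx1 x ((1 + w) * log Q) ≤ log C + log Q := by
      rw [← log_mul hC.ne' (by positivity)]
      exact log_le_log (one_pos.trans_le (one_le_lambda1_bodyC _ _))
        (lambda1_bodyC_le_of_approx hQ1.le hq hqQ happ)
    rw [div_le_iff₀ (by positivity)]
    refine hL.trans_eq ?_
    field_simp
    ring
  · simpa using ENNReal.tendsto_ofReal
      (tendsto_const_nhds.add (tendsto_const_nhds.div_atTop tendsto_id))

lemma liminf_Lx1_div_le_one (x : Fin n → ℝ) :
    liminf (fun t => ENNReal.ofReal (Lx1 x t / t)) atTop ≤ 1 :=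
  liminf_le_of_frequently_le_of_tendsto (Eventually.frequently <|
    (eventually_ge_atTop 0).mono fun _ ht =>
      ENNReal.ofReal_le_one.2 (div_le_one_of_le₀ (Lx1_le_self x ht) ht)) tendsto_const_nhds

end Exponents

theorem liminf_Lx1_div_general (n : ℕ) (x : Fin n → ℝ) :
    Filter.liminf (fun q : ℝ => ENNReal.ofReal (Lx1 x q / q)) Filter.atTop =
      1 / (1 + omegaExp x) := by
  rw [one_div]
  exact ENNReal.eq_inv_one_add_sSup_ofReal (liminf_Lx1_div_le_one x)
    (fun w hw => liminf_Lx1_div_le hw.1 hw.2)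
    (fun w hw hW => inv_one_add_le_liminf_Lx1_div hw fun h => hW ⟨hw, h⟩)

/-- `liminf_{q→∞} L_{x,1}(q)/q = 1/(1 + ω(x))`, with the convention `1/(1+∞) = 0`. -/
theorem liminf_Lx1_div (n : ℕ) (hn : 0 < n) (x : Fin n → ℝ) :
    Filter.liminf (fun q : ℝ => ENNReal.ofReal (Lx1 x q / q)) Filter.atTop =
      1 / (1 + omegaExp x) :=
  liminf_Lx1_div_general n x
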